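/- arXiv:1110.5092 — 7 statements merged into one kernel-verified Lean document; each statement's English description precedes it below -/
import Mathlib

section
/- Let M, N be positive integers with N ≥ M and N < 2M, and let r ≥ 1. Define B as the N×M matrix whose top M×M block is the identity and remaining rows are zero, and C as the N×M matrix whose bottom M×M block is the identity and remaining rows are zero. Then the rN × (r+1)M block-bidiagonal matrix A_r with block (i,i) = B and block (i,i+1) = C for i = 1,...,r (all other blocks zero) has full rank min(rN, (r+1)M). -/
/-- The `N × M` matrix `B = [I_M; 0]` (identity on top, zero rows below). -/
noncomputable def Bmat (M N : ℕ) : Matrix (Fin N) (Fin M) ℂ :=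
  fun i j => if (i : ℕ) = (j : ℕ) then 1 else 0

/-- The `N × M` matrix `C = [0; I_M]` (zero rows on top, identity below). -/
noncomputable def Cmat (M N : ℕ) : Matrix (Fin N) (Fin M) ℂ :=
  fun i j => if (i : ℕ) = (j : ℕ) + (N - M) then 1 else 0

/-- The `rN × (r+1)M` block-bidiagonal matrix with block `(i,i) = B` and
block `(i,i+1) = C` for `i = 1,…,r`, all other blocks zero. -/
noncomputable def Amat (M N r : ℕ) : Matrix (Fin (r * N)) (Fin ((r + 1) * M)) ℂ :=
  fun i j =>
    if (j : ℕ) / M = (i : ℕ) / N then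
      Bmat M N ⟨(i : ℕ) % N, Nat.mod_lt _ (by have hi := i.isLt; exact Nat.pos_of_ne_zero (by rintro rfl; simp at hi))⟩
        ⟨(j : ℕ) % M, Nat.mod_lt _ (by have hj := j.isLt; exact Nat.pos_of_ne_zero (by rintro rfl; simp at hj))⟩
    else if (j : ℕ) / M = (i : ℕ) / N + 1 then
      Cmat M N ⟨(i : ℕ) % N, Nat.mod_lt _ (by have hi := i.isLt; exact Nat.pos_of_ne_zero (by rintro rfl; simp at hi))⟩
        ⟨(j : ℕ) % M, Nat.mod_lt _ (by have hj := j.isLt; exact Nat.pos_of_ne_zero (by rintro rfl; simp at hj))⟩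
    else 0

open Matrix in
lemma div_mod_decomp {M q s : ℕ} (hM : 0 < M) (hs : s < M) :
    (q * M + s) / M = q ∧ (q * M + s) % M = s := by
  constructor
  · rw [add_comm, Nat.add_mul_div_right _ _ hM, Nat.div_eq_of_lt hs, zero_add]
  · rw [add_comm, Nat.add_mul_mod_self_right, Nat.mod_eq_of_lt hs]

open Matrix

lemma amat_eq (M N r : ℕ) (hM : 1 ≤ M) (hMN : M ≤ N) (hN2M : N < 2 * M)
    (i : Fin (r * N)) (j : Fin ((r + 1) * M)) :
    Amat M N r i j =
      (if ((i : ℕ) % N < M ∧ (j : ℕ) = ((i : ℕ) / N) * M + (i : ℕ) % N) then (1:ℂ) else 0)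
      + (if (N - M ≤ (i : ℕ) % N ∧ (j : ℕ) = ((i : ℕ) / N + 1) * M + ((i : ℕ) % N - (N - M))) then (1:ℂ) else 0) := by
  have hN : 0 < N := by omega
  have hMpos : 0 < M := hM
  have hs : (i : ℕ) % N < N := Nat.mod_lt _ hN
  have ht : (j : ℕ) % M < M := Nat.mod_lt _ hMpos
  have hjd : (j : ℕ) / M * M + (j : ℕ) % M = (j : ℕ) := by rw [mul_comm]; exact Nat.div_add_mod _ _
  set q := (i : ℕ) / N with hq
  set s := (i : ℕ) % N with hsd
  set p := (j : ℕ) / M with hp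
  set t := (j : ℕ) % M with htd
  have hBval : Bmat M N ⟨s, hs⟩ ⟨t, ht⟩ = if s = t then (1:ℂ) else 0 := rfl
  have hCval : Cmat M N ⟨s, hs⟩ ⟨t, ht⟩ = if s = t + (N - M) then (1:ℂ) else 0 := rfl
  have hAval : Amat M N r i j =
      if p = q then (if s = t then (1:ℂ) else 0)
      else if p = q + 1 then (if s = t + (N - M) then (1:ℂ) else 0) else 0 := rfl
  rw [hAval]
  by_cases hC1 : s < M ∧ (j : ℕ) = q * M + s
  · -- p = q, t = s
    obtain ⟨hd, hm⟩ := div_mod_decomp hMpos hC1.1 (q := q)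
    have hpq : p = q := by rw [hp, hC1.2, hd]
    have hts : t = s := by rw [htd, hC1.2, hm]
    have hC2 : ¬ (N - M ≤ s ∧ (j : ℕ) = (q + 1) * M + (s - (N - M))) := by
      rintro ⟨h1, h2⟩
      have e : q * M + s = q * M + M + (s - (N - M)) := by
        rw [← hC1.2, h2]; ring_nf
      omega
    rw [if_pos hpq, if_pos hC1, if_neg hC2, if_pos hts.symm]
    norm_num
  · by_cases hC2 : N - M ≤ s ∧ (j : ℕ) = (q + 1) * M + (s - (N - M))
    · have hlt : s - (N - M) < M := by omega
      obtain ⟨hd, hm⟩ := div_mod_decomp hMpos hlt (q := q + 1)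
      have hpq : p = q + 1 := by rw [hp, hC2.2, hd]
      have hts : t = s - (N - M) := by rw [htd, hC2.2, hm]
      have hst : s = t + (N - M) := by omega
      rw [if_neg (by omega : ¬ p = q), if_pos hpq, if_neg hC1, if_pos hC2, if_pos hst]
      norm_num
    · rw [if_neg hC1, if_neg hC2]
      by_cases hpq : p = q
      · rw [if_pos hpq]
        have : ¬ s = t := by
          intro h
          exact hC1 ⟨h ▸ ht, by rw [← hjd, hpq, h]⟩
        rw [if_neg this]; norm_num
      · rw [if_neg hpq]
        by_cases hpq1 : p = q + 1
        · rw [if_pos hpq1]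
          have : ¬ s = t + (N - M) := by
            intro h
            exact hC2 ⟨by omega, by rw [← hjd, hpq1]; congr 1; omega⟩
          rw [if_neg this]; norm_num
        · rw [if_neg hpq1]; norm_num

lemma sum_ind {n : ℕ} (C : Prop) [Decidable C] (a : ℕ) (v : Fin n → ℂ) :
    (∑ x : Fin n, (if (C ∧ (x : ℕ) = a) then (1:ℂ) else 0) * v x)
      = if C then (if h : a < n then v ⟨a, h⟩ else 0) else 0 := by
  by_cases hC : C
  · simp only [hC, true_and, if_true]
    split_ifs with h
    · rw [Finset.sum_eq_single (⟨a, h⟩ : Fin n)]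
      · simp
      · intro b _ hb
        have : (b : ℕ) ≠ a := fun e => hb (Fin.ext e)
        simp [this]
      · simp
    · apply Finset.sum_eq_zero
      intro b _
      have : (b : ℕ) ≠ a := fun e => h (e ▸ b.isLt)
      simp [this]
  · simp [hC]

/-- abstract chain lemma, column case (`M ≤ r*d`) -/
lemma colzero (d M r : ℕ) (hM : 1 ≤ M) (hrdM : M ≤ r * d) (w : ℕ → ℕ → ℂ)
    (H1 : ∀ q, q < r → ∀ s, s < d → w q s = 0)
    (H2 : ∀ p, 1 ≤ p → p ≤ r → ∀ t, M ≤ t + d → t < M → w p t = 0)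
    (H3 : ∀ q, q < r → ∀ s, d ≤ s → s < M → w q s + w (q + 1) (s - d) = 0) :
    ∀ p, p ≤ r → ∀ t, t < M → w p t = 0 := by
  have hd : 1 ≤ d := by
    rcases Nat.eq_zero_or_pos d with h | h
    · subst h; simp at hrdM; omega
    · exact h
  -- down: if p*d + t < r*d then w p t = 0
  have down : ∀ t, t < M → ∀ p, p * d + t < r * d → w p t = 0 := by
    intro t
    induction t using Nat.strong_induction_on with
    | _ t ih =>
      intro htM p hpt
      have hpr : p < r := by
        by_contra h
        have : r * d ≤ p * d := Nat.mul_le_mul_right d (by omega)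
        omega
      by_cases hts : t < d
      · exact H1 p hpr t hts
      · have heq := H3 p hpr t (by omega) htM
        have hrec : w (p + 1) (t - d) = 0 := by
          apply ih (t - d) (by omega) (by omega)
          have : (p + 1) * d = p * d + d := by ring
          omega
        rw [hrec] at heq
        simpa using heq
  have up : ∀ p, p ≤ r → ∀ t, t < M → M ≤ t + p * d → w p t = 0 := by
    intro p
    induction p with
    | zero => intro _ t htM hle; simp at hle; omega
    | succ p ih =>
      intro hpr t htM hle
      by_cases h : M ≤ t + d
      · exact H2 (p + 1) (by omega) hpr t h htM
      · have heq := H3 p (by omega) (t + d) (by omega) (by omega)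
        have hrec : w p (t + d) = 0 := by
          apply ih (by omega) (t + d) (by omega)
          have : t + (p + 1) * d = t + d + p * d := by ring
          omega
        rw [hrec, Nat.add_sub_cancel] at heq
        simpa using heq
  intro p hpr t htM
  by_cases h : p * d + t < r * d
  · exact down t htM p h
  · exact up p hpr t htM (by omega)

/-- abstract chain lemma, row case (`r*d ≤ M`) -/
lemma rowzero (d M r : ℕ) (hr : 1 ≤ r) (hrdM : r * d ≤ M) (c : ℕ → ℕ → ℂ)
    (G1 : ∀ t, t < M → c 0 t = 0)
    (G2 : ∀ t, d ≤ t → t < M + d → c (r - 1) t = 0)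
    (G3 : ∀ p, 1 ≤ p → p ≤ r - 1 → ∀ t, t < M → c p t + c (p - 1) (t + d) = 0) :
    ∀ q, q < r → ∀ s, s < M + d → c q s = 0 := by
  have upR : ∀ q, q ≤ r - 1 → ∀ s, s + q * d < M → c q s = 0 := by
    intro q
    induction q with
    | zero => intro _ s hs; exact G1 s (by omega)
    | succ q ih =>
      intro hqr s hs
      have heq := G3 (q + 1) (by omega) hqr s (by
        have : (q+1) * d = q * d + d := by ring
        omega)
      have hrec : c q (s + d) = 0 := by
        apply ih (by omega) (s + d)
        have : (q + 1) * d = q * d + d := by ring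
        omega
      have : c (q + 1 - 1) (s + d) = 0 := by simpa using hrec
      rw [this] at heq
      simpa using heq
  have downR : ∀ k q s, q + k = r - 1 → s < M + d → (r - q) * d ≤ s → c q s = 0 := by
    intro k
    induction k with
    | zero =>
      intro q s hq hs hds
      have hq' : q = r - 1 := by omega
      subst hq'
      apply G2 s _ hs
      have : (r - (r-1)) * d = d := by
        have : r - (r - 1) = 1 := by omega
        rw [this, one_mul]
      omega
    | succ k ih =>
      intro q s hq hs hds
      have h2d : 2 * d ≤ s := by
        have h2 : 2 ≤ r - q := by omega
        have := Nat.mul_le_mul_right d h2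
        omega
      have heq := G3 (q + 1) (by omega) (by omega) (s - d) (by omega)
      have hrec : c (q + 1) (s - d) = 0 := by
        apply ih (q + 1) (s - d) (by omega) (by omega)
        have e1 : (r - (q + 1)) * d + d = (r - q) * d := by
          have : r - q = (r - (q+1)) + 1 := by omega
          rw [this]; ring
        omega
      have e2 : q + 1 - 1 = q := by omega
      have e3 : s - d + d = s := by omega
      rw [hrec, e2, e3] at heq
      simpa using heq
  intro q hq s hs
  by_cases h : (r - q) * d ≤ s
  · exact downR (r - 1 - q) q s (by omega) hs h
  · apply upR q (by omega) s
    have e : (r - q) * d + q * d = ((r - q) + q) * d := (add_mul _ _ _).symm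
    have e2 : (r - q) + q = r := by omega
    rw [e2] at e
    omega

theorem stmt_0 (M N r : ℕ) (hM : 1 ≤ M) (hMN : M ≤ N) (hN2M : N < 2 * M) (hr : 1 ≤ r) :
    (Amat M N r).rank = min (r * N) ((r + 1) * M) := by
  have hN : 0 < N := by omega
  set d := N - M with hdd
  have hNd : N = M + d := by omega
  have hdM : d < M := by omega
  have erN : r * N = r * M + r * d := by rw [hNd]; ring
  have erM : (r + 1) * M = r * M + M := by ring
  -- mulVec formula
  have hmul : ∀ (v : Fin ((r + 1) * M) → ℂ) (i : Fin (r * N)),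
      (Amat M N r).mulVec v i =
        (if (i : ℕ) % N < M then
          (if h : (i : ℕ) / N * M + (i : ℕ) % N < (r + 1) * M then v ⟨_, h⟩ else 0) else 0)
        + (if d ≤ (i : ℕ) % N then
          (if h : ((i : ℕ) / N + 1) * M + ((i : ℕ) % N - d) < (r + 1) * M then v ⟨_, h⟩ else 0) else 0) := by
    intro v i
    have h0 : (Amat M N r).mulVec v i = ∑ j, Amat M N r i j * v j := rfl
    rw [h0]
    have h1 : ∀ j : Fin ((r + 1) * M), Amat M N r i j * v j =
        (if ((i : ℕ) % N < M ∧ (j : ℕ) = ((i : ℕ) / N) * M + (i : ℕ) % N) then (1:ℂ) else 0) * v j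
        + (if (d ≤ (i : ℕ) % N ∧ (j : ℕ) = ((i : ℕ) / N + 1) * M + ((i : ℕ) % N - d)) then (1:ℂ) else 0) * v j := by
      intro j
      rw [amat_eq M N r hM hMN hN2M i j, add_mul]
    rw [Finset.sum_congr rfl (fun j _ => h1 j), Finset.sum_add_distrib, sum_ind, sum_ind]
  by_cases hcase : (r + 1) * M ≤ r * N
  · -- full column rank
    have hMrd : M ≤ r * d := by omega
    have hinj : Function.Injective (Amat M N r).mulVecLin := by
      rw [← LinearMap.ker_eq_bot, LinearMap.ker_eq_bot']
      intro v hv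
      have hv' : ∀ i, (Amat M N r).mulVec v i = 0 := by
        intro i
        rw [← Matrix.mulVecLin_apply]
        exact congrFun hv i
      set V : ℕ → ℂ := fun a => if h : a < (r + 1) * M then v ⟨a, h⟩ else 0 with hV
      have hveq : ∀ q s, q < r → s < N →
          (if s < M then V (q * M + s) else 0)
            + (if d ≤ s then V ((q + 1) * M + (s - d)) else 0) = 0 := by
        intro q s hq hs
        have hi : q * N + s < r * N := by
          have h1 : (q + 1) * N ≤ r * N := Nat.mul_le_mul_right _ (by omega)
          have h2 : (q + 1) * N = q * N + N := by ring
          omega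
        have := hv' ⟨q * N + s, hi⟩
        rw [hmul] at this
        have hdm := div_mod_decomp hN hs (q := q)
        simpa [hdm.1, hdm.2, hV] using this
      have hall : ∀ p, p ≤ r → ∀ t, t < M → V (p * M + t) = 0 := by
        apply colzero d M r hM hMrd (fun p t => V (p * M + t))
        · intro q hq s hsd
          have := hveq q s hq (by omega)
          rw [if_pos (by omega : s < M), if_neg (by omega : ¬ d ≤ s)] at this
          simpa using this
        · intro p hp1 hpr t htd htM
          have := hveq (p - 1) (t + d) (by omega) (by omega)
          rw [if_neg (by omega : ¬ t + d < M), if_pos (by omega : d ≤ t + d)] at this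
          have e1 : p - 1 + 1 = p := by omega
          rw [e1, Nat.add_sub_cancel] at this
          simpa using this
        · intro q hq s hds hsM
          have := hveq q s hq (by omega)
          rw [if_pos hsM, if_pos hds] at this
          exact this
      funext x
      have hx : (x : ℕ) = ((x : ℕ) / M) * M + (x : ℕ) % M := by
        have h1 := Nat.div_add_mod (x : ℕ) M
        have h2 : M * ((x : ℕ) / M) = (x : ℕ) / M * M := Nat.mul_comm _ _
        omega
      have hp : (x : ℕ) / M ≤ r := by
        by_contra h
        have h1 : (r + 1) * M ≤ ((x : ℕ) / M) * M := Nat.mul_le_mul_right _ (by omega)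
        have hxlt := x.isLt
        omega
      have hlt : ((x : ℕ) / M) * M + (x : ℕ) % M < (r + 1) * M := hx ▸ x.isLt
      have := hall ((x : ℕ) / M) hp ((x : ℕ) % M) (Nat.mod_lt _ hM)
      simp only [hV] at this
      rw [dif_pos hlt] at this
      have hxe : (⟨((x : ℕ) / M) * M + (x : ℕ) % M, hlt⟩ : Fin ((r + 1) * M)) = x :=
        Fin.ext hx.symm
      rw [hxe] at this
      simpa using this
    have hrank : (Amat M N r).rank = (r + 1) * M := by
      have h0 : (Amat M N r).rank
          = Module.finrank ℂ (LinearMap.range (Amat M N r).mulVecLin) := rfl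
      rw [h0, LinearMap.finrank_range_of_inj hinj, Module.finrank_fin_fun]
    rw [hrank, min_eq_right hcase]
  · -- full row rank
    push_neg at hcase
    have hrdM : r * d ≤ M := by omega
    -- transpose mulVec formula
    have htmul : ∀ (c : Fin (r * N) → ℂ) (j : Fin ((r + 1) * M)),
        (Amat M N r)ᵀ.mulVec c j =
          (if h : (j : ℕ) / M * N + (j : ℕ) % M < r * N then c ⟨_, h⟩ else 0)
          + (if 1 ≤ (j : ℕ) / M then
              (if h : ((j : ℕ) / M - 1) * N + ((j : ℕ) % M + d) < r * N then c ⟨_, h⟩ else 0)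
            else 0) := by
      intro c j
      have h0 : (Amat M N r)ᵀ.mulVec c j = ∑ i, Amat M N r i j * c i := by
        simp [Matrix.mulVec, dotProduct, Matrix.transpose_apply]
      rw [h0]
      set p := (j : ℕ) / M with hpd
      set t := (j : ℕ) % M with htd
      have ht : t < M := Nat.mod_lt _ hM
      clear_value p t
      have hjdec : (j : ℕ) = p * M + t := by
        rw [hpd, htd]
        have h1 := Nat.div_add_mod (j : ℕ) M
        have h2 : M * ((j : ℕ) / M) = (j : ℕ) / M * M := Nat.mul_comm _ _
        omega
      have h1 : ∀ i : Fin (r * N), Amat M N r i j * c i =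
          (if (True ∧ (i : ℕ) = p * N + t) then (1:ℂ) else 0) * c i
          + (if (1 ≤ p ∧ (i : ℕ) = (p - 1) * N + (t + d)) then (1:ℂ) else 0) * c i := by
        intro i
        rw [amat_eq M N r hM hMN hN2M i j, add_mul]
        set q := (i : ℕ) / N with hqd
        set s := (i : ℕ) % N with hsd
        have hs : s < N := Nat.mod_lt _ hN
        clear_value q s
        have hidec : (i : ℕ) = q * N + s := by
          rw [hqd, hsd]
          have h1 := Nat.div_add_mod (i : ℕ) N
          have h2 : N * ((i : ℕ) / N) = (i : ℕ) / N * N := Nat.mul_comm _ _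
          omega
        have iff1 : (s < M ∧ (j : ℕ) = q * M + s) ↔ (True ∧ (i : ℕ) = p * N + t) := by
          constructor
          · rintro ⟨h1, h2⟩
            have hdm := div_mod_decomp hM h1 (q := q)
            have hpq : p = q := by rw [hpd, h2, hdm.1]
            have hts : t = s := by rw [htd, h2, hdm.2]
            exact ⟨trivial, by rw [hidec, hpq, hts]⟩
          · rintro ⟨-, h2⟩
            have htN : t < N := by omega
            have hdm := div_mod_decomp hN htN (q := p)
            have hqp : q = p := by rw [hqd, h2, hdm.1]
            have hst : s = t := by rw [hsd, h2, hdm.2]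
            exact ⟨by omega, by rw [hjdec, hqp, hst]⟩
        have iff2 : (d ≤ s ∧ (j : ℕ) = (q + 1) * M + (s - d)) ↔
            (1 ≤ p ∧ (i : ℕ) = (p - 1) * N + (t + d)) := by
          constructor
          · rintro ⟨h1, h2⟩
            have hsdM : s - d < M := by omega
            have hdm := div_mod_decomp hM hsdM (q := q + 1)
            have hpq : p = q + 1 := by rw [hpd, h2, hdm.1]
            have hts : t = s - d := by rw [htd, h2, hdm.2]
            refine ⟨by rw [hpq]; omega, ?_⟩
            have e1 : p - 1 = q := by rw [hpq]; omega
            have e2 : t + d = s := by rw [hts]; omega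
            rw [hidec, e1, e2]
          · rintro ⟨h1, h2⟩
            have htdN : t + d < N := by omega
            have hdm := div_mod_decomp hN htdN (q := p - 1)
            have hqp : q = p - 1 := by rw [hqd, h2, hdm.1]
            have hst : s = t + d := by rw [hsd, h2, hdm.2]
            refine ⟨by omega, ?_⟩
            have e1 : q + 1 = p := by rw [hqp]; omega
            have e2 : s - d = t := by rw [hst]; omega
            rw [hjdec, e1, e2]
        rw [if_congr iff1 rfl rfl, if_congr iff2 rfl rfl]
      rw [Finset.sum_congr rfl (fun i _ => h1 i), Finset.sum_add_distrib, sum_ind, sum_ind,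
        if_pos trivial]
    have hinjT : Function.Injective (Amat M N r)ᵀ.mulVecLin := by
      rw [← LinearMap.ker_eq_bot, LinearMap.ker_eq_bot']
      intro c hc
      have hc' : ∀ j, (Amat M N r)ᵀ.mulVec c j = 0 := by
        intro j
        rw [← Matrix.mulVecLin_apply]
        exact congrFun hc j
      set Cc : ℕ → ℂ := fun a => if h : a < r * N then c ⟨a, h⟩ else 0 with hCc
      have hceq : ∀ p t, p ≤ r → t < M →
          Cc (p * N + t) + (if 1 ≤ p then Cc ((p - 1) * N + (t + d)) else 0) = 0 := by
        intro p t hp ht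
        have hj : p * M + t < (r + 1) * M := by
          have h1 : (p + 1) * M ≤ (r + 1) * M := Nat.mul_le_mul_right _ (by omega)
          have h2 : (p + 1) * M = p * M + M := by ring
          omega
        have := hc' ⟨p * M + t, hj⟩
        rw [htmul] at this
        have hdm := div_mod_decomp hM ht (q := p)
        simpa [hdm.1, hdm.2, hCc] using this
      have hall : ∀ q, q < r → ∀ s, s < M + d → Cc (q * N + s) = 0 := by
        apply rowzero d M r hr hrdM (fun q s => Cc (q * N + s))
        · intro t ht
          have := hceq 0 t (by omega) ht
          rw [if_neg (by omega : ¬ 1 ≤ 0)] at this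
          simpa using this
        · intro t hdt htMd
          have := hceq r (t - d) (le_refl r) (by omega)
          rw [if_pos hr] at this
          have h1 : ¬ r * N + (t - d) < r * N := by omega
          have h2 : Cc (r * N + (t - d)) = 0 := by
            simp only [hCc]; rw [dif_neg h1]
          have e : t - d + d = t := by omega
          rw [h2, e] at this
          simpa using this
        · intro p hp1 hpr t ht
          have := hceq p t (by omega) ht
          rw [if_pos hp1] at this
          exact this
      funext x
      have hx : (x : ℕ) = ((x : ℕ) / N) * N + (x : ℕ) % N := by
        have h1 := Nat.div_add_mod (x : ℕ) N
        have h2 : N * ((x : ℕ) / N) = (x : ℕ) / N * N := Nat.mul_comm _ _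
        omega
      have hq : (x : ℕ) / N < r := by
        by_contra h
        have h1 : r * N ≤ ((x : ℕ) / N) * N := Nat.mul_le_mul_right _ (by omega)
        have hxlt := x.isLt
        omega
      have := hall ((x : ℕ) / N) hq ((x : ℕ) % N) (by have := Nat.mod_lt (x : ℕ) hN; omega)
      have hlt : ((x : ℕ) / N) * N + (x : ℕ) % N < r * N := hx ▸ x.isLt
      simp only [hCc] at this
      rw [dif_pos hlt] at this
      have hxe : (⟨((x : ℕ) / N) * N + (x : ℕ) % N, hlt⟩ : Fin (r * N)) = x := Fin.ext hx.symm
      rw [hxe] at this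
      simpa using this
    have hrank : (Amat M N r).rank = r * N := by
      rw [← Matrix.rank_transpose]
      have h0 : (Amat M N r)ᵀ.rank
          = Module.finrank ℂ (LinearMap.range (Amat M N r)ᵀ.mulVecLin) := rfl
      rw [h0, LinearMap.finrank_range_of_inj hinjT, Module.finrank_fin_fun]
    rw [hrank, min_eq_left (by omega)]
end

section
/- Let d, M, N be positive integers with N ≥ M and N + M = 4d. If N ≠ M and (2d − M) does not divide d, then there exists a nonnegative integer r such that (2r+1)d > max(rN, (r+1)M). Specifically, taking r to be the nearest integer to M/(N−M) works. -/
/-! With k := 2d - M we get N = 2d + k, and the two strict inequalities reduce to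
r k < d and d < (r + 1) k, i.e. r = ⌊d / k⌋ with k ∤ d. On the other hand
M / (N - M) = d / k - 1/2, whose nearest integer is again ⌊d / k⌋. -/

theorem round_sub_half_eq_floor {α : Type*} [Field α] [LinearOrder α] [IsStrictOrderedRing α]
    [FloorRing α] (x : α) : round (x - 1 / 2) = ⌊x⌋ := by
  rw [round_eq, sub_add_cancel]

theorem max_mul_lt_two_mul_add_one_mul {d k r M N : ℕ} (hM : M + k = 2 * d)
    (hN : N = 2 * d + k) (hlo : r * k < d) (hhi : d < (r + 1) * k) :
    max (r * N) ((r + 1) * M) < (2 * r + 1) * d := by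
  subst hN
  refine max_lt ?_ ?_ <;> nlinarith

theorem div_sub_eq_div_sub_half {d k M N : ℕ} (hk : k ≠ 0) (hM : M + k = 2 * d)
    (hN : N = 2 * d + k) :
    (M : ℚ) / ((N : ℚ) - (M : ℚ)) = (d : ℚ) / k - 1 / 2 := by
  have hM' : (M : ℚ) = 2 * d - k := by
    rw [eq_sub_iff_add_eq]
    exact_mod_cast hM
  have hk' : (k : ℚ) ≠ 0 := by exact_mod_cast hk
  rw [hN, hM']
  push_cast
  rw [show (2 * d + k : ℚ) - (2 * d - k) = 2 * k by ring]
  field_simp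

theorem stmt_4_general (d M N : ℕ)
    (hMN : M ≤ N) (hsum : N + M = 4 * d) (hne : N ≠ M)
    (hndvd : ¬ (2 * d - M) ∣ d) :
    ∃ r : ℕ, (2 * r + 1) * d > max (r * N) ((r + 1) * M) ∧
      (r : ℤ) = round ((M : ℚ) / ((N : ℚ) - (M : ℚ))) := by
  set k := 2 * d - M
  have hk : 0 < k := by omega
  have hMk : M + k = 2 * d := by omega
  have hNk : N = 2 * d + k := by omega
  refine ⟨d / k, ?_, ?_⟩
  · have hlo : d / k * k < d := by
      rw [mul_comm]
      exact Nat.mul_div_lt_iff_not_dvd.mpr hndvd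
    have hhi : d < (d / k + 1) * k := by
      rw [add_mul, one_mul]
      exact Nat.lt_div_mul_add hk
    exact max_mul_lt_two_mul_add_one_mul hMk hNk hlo hhi
  · rw [div_sub_eq_div_sub_half hk.ne' hMk hNk, round_sub_half_eq_floor,
      Rat.floor_natCast_div_natCast, Int.natCast_div]

theorem stmt_4 (d M N : ℕ) (hd : 0 < d) (hM : 0 < M) (hN : 0 < N)
    (hMN : M ≤ N) (hsum : N + M = 4 * d) (hne : N ≠ M)
    (hndvd : ¬ (2 * d - M) ∣ d) :
    ∃ r : ℕ, (2 * r + 1) * d > max (r * N) ((r + 1) * M) ∧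
      (r : ℤ) = round ((M : ℚ) / ((N : ℚ) - (M : ℚ))) :=
  stmt_4_general d M N hMN hsum hne hndvd
end

section
/- Let d, M, N be positive integers with N ≥ M. If (2r+1)d ≤ max(rN, (r+1)M) for all nonnegative integers r, then 4d ≤ M + N. -/
theorem stmt_6 (d M N : ℕ) (hd : 0 < d) (hM : 0 < M) (hN : 0 < N) (hMN : M ≤ N)
    (hfeas : ∀ r : ℕ, (2 * r + 1) * d ≤ max (r * N) ((r + 1) * M)) :
    4 * d ≤ M + N := by
  rcases eq_or_lt_of_le hMN with h | h
  · -- M = N case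
    subst h
    have h1 := hfeas M
    have hmax : max (M * M) ((M + 1) * M) = (M + 1) * M := by
      apply Nat.max_eq_right; nlinarith
    rw [hmax] at h1
    nlinarith
  · set k := N - M with hk
    have hk0 : 0 < k := by omega
    have hN' : N = M + k := by omega
    set q := M / k with hq
    have hqk : q * k ≤ M := Nat.div_mul_le_self M k
    have e1 : k * q + M % k = M := Nat.div_add_mod M k
    have e2 : M % k < k := Nat.mod_lt M hk0
    have hqk2 : M < q * k + k := by rw [mul_comm]; linarith
    have h1 := hfeas q
    have h2 := hfeas (q + 1)
    have m1 : max (q * N) ((q + 1) * M) = (q + 1) * M := by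
      apply Nat.max_eq_right; rw [hN']; nlinarith
    have m2 : max ((q + 1) * N) ((q + 1 + 1) * M) = (q + 1) * N := by
      apply Nat.max_eq_left; rw [hN']; nlinarith
    rw [m1] at h1
    rw [m2] at h2
    have key : (q + 1) * (4 * d) ≤ (q + 1) * (M + N) := by nlinarith
    exact Nat.le_of_mul_le_mul_left key (Nat.succ_pos q)
end

section
/- Let M, N, r be positive integers with rN < (r+1)M and (r+1)N ≥ (r+2)M, and let d be a positive integer satisfying (2s+1)d ≤ max(sN, (s+1)M) for all integers s ≥ 0. Then (2r+3)d ≤ (r+1)N and (2r+1)d ≤ (r+1)M. -/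
theorem stmt_9 (M N d r : ℕ) (hM : 0 < M) (hN : 0 < N) (hd : 0 < d) (hr : 0 < r)
    (h1 : r * N < (r + 1) * M) (h2 : (r + 2) * M ≤ (r + 1) * N)
    (hfeas : ∀ s : ℕ, (2 * s + 1) * d ≤ max (s * N) ((s + 1) * M)) :
    (2 * r + 3) * d ≤ (r + 1) * N ∧ (2 * r + 1) * d ≤ (r + 1) * M := by
  constructor
  · have h := hfeas (r + 1)
    rw [max_eq_left (by linarith)] at h
    linarith
  · have h := hfeas r
    rw [max_eq_right (by linarith)] at h
    linarith
end

section
/- Let N ≥ M ≥ 1 and r ≥ 1 be integers with N < 2M. Then the rN × (r+1)M block matrix A_r built from B = [I_M;0] and C = [0;I_M] (block (i,i)=B, block (i,i+1)=C) has kernel of dimension exactly max(0, (r+1)M − rN). -/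
section Row
variable {M N r : ℕ}

lemma div_add (i a : ℕ) (hN : 0 < N) (ha : a < N) : (i * N + a) / N = i ∧ (i * N + a) % N = a := by
  rw [mul_comm, Nat.mul_add_div hN, Nat.mul_add_mod, Nat.div_eq_of_lt ha, Nat.mod_eq_of_lt ha]
  omega

lemma rowEq (hM : 1 ≤ M) (hMN : M ≤ N) (hN2M : N < 2 * M)
    (x : Fin ((r + 1) * M) → ℂ) (i a : ℕ) (hi : i < r) (ha : a < N)
    (hrow : i * N + a < r * N)
    (hj1 : i * M + a < (r + 1) * M) (hj2 : (i + 1) * M + (a - (N - M)) < (r + 1) * M) :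
    (Amat M N r).mulVec x ⟨i * N + a, hrow⟩ =
      (if a < M then x ⟨i * M + a, hj1⟩ else 0) +
      (if N - M ≤ a then x ⟨(i + 1) * M + (a - (N - M)), hj2⟩ else 0) := by
  have hN : 0 < N := lt_of_lt_of_le hM hMN
  have hdM : N - M < M := by omega
  obtain ⟨hdiv, hmod⟩ := div_add i a hN ha
  have e1 : (i + 1) * M = i * M + M := by ring
  have key : ∀ j : Fin ((r + 1) * M),
      Amat M N r ⟨i * N + a, hrow⟩ j * x j =
      (if a < M then (if j = (⟨i * M + a, hj1⟩ : Fin ((r+1)*M)) then x j else 0) else 0) +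
      (if N - M ≤ a then (if j = (⟨(i + 1) * M + (a - (N - M)), hj2⟩ : Fin ((r+1)*M)) then x j else 0) else 0) := by
    intro j
    have hs : (j : ℕ) % M < M := Nat.mod_lt _ hM
    have hjdm : (j : ℕ) = (j : ℕ) / M * M + (j : ℕ) % M := (Nat.div_add_mod' _ _).symm
    simp only [Amat, Bmat, Cmat, hdiv, hmod]
    by_cases h1 : (j : ℕ) / M = i
    · have hjv : (j : ℕ) = i * M + (j : ℕ) % M := by rw [← h1]; exact hjdm
      rw [if_pos h1]
      by_cases h2 : a = (j : ℕ) % M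
      · have haM : a < M := h2 ▸ hs
        have hje : j = (⟨i * M + a, hj1⟩ : Fin ((r+1)*M)) := by
          apply Fin.ext; show (j : ℕ) = i * M + a; omega
        have hne : j ≠ (⟨(i + 1) * M + (a - (N - M)), hj2⟩ : Fin ((r+1)*M)) := by
          intro he
          have hvv : (j : ℕ) = (i + 1) * M + (a - (N - M)) := by rw [he]
          omega
        rw [if_pos h2, one_mul, if_pos haM, if_pos hje, if_neg hne]
        split_ifs <;> simp
      · have n1 : j ≠ (⟨i * M + a, hj1⟩ : Fin ((r+1)*M)) := by
          intro he
          have hvv : (j : ℕ) = i * M + a := by rw [he]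
          omega
        have n2 : j ≠ (⟨(i + 1) * M + (a - (N - M)), hj2⟩ : Fin ((r+1)*M)) := by
          intro he
          have hvv : (j : ℕ) = (i + 1) * M + (a - (N - M)) := by rw [he]
          omega
        rw [if_neg h2, zero_mul, if_neg n1, if_neg n2]
        split_ifs <;> simp
    · rw [if_neg h1]
      by_cases h3 : (j : ℕ) / M = i + 1
      · have hjv : (j : ℕ) = (i + 1) * M + (j : ℕ) % M := by rw [← h3]; exact hjdm
        rw [if_pos h3]
        by_cases h4 : a = (j : ℕ) % M + (N - M)
        · have hje : j = (⟨(i + 1) * M + (a - (N - M)), hj2⟩ : Fin ((r+1)*M)) := by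
            apply Fin.ext; show (j : ℕ) = (i + 1) * M + (a - (N - M)); omega
          have hne : j ≠ (⟨i * M + a, hj1⟩ : Fin ((r+1)*M)) := by
            intro he
            have hvv : (j : ℕ) = i * M + a := by rw [he]
            omega
          rw [if_pos h4, one_mul, if_pos (by omega : N - M ≤ a), if_pos hje, if_neg hne]
          split_ifs <;> simp
        · rw [if_neg h4, zero_mul]
          have z1 : (if a < M then (if j = (⟨i * M + a, hj1⟩ : Fin ((r+1)*M)) then x j else 0) else 0) = 0 := by
            split_ifs with hA hE
            · exfalso
              have hvv : (j : ℕ) = i * M + a := by rw [hE]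
              omega
            · rfl
            · rfl
          have z2 : (if N - M ≤ a then (if j = (⟨(i + 1) * M + (a - (N - M)), hj2⟩ : Fin ((r+1)*M)) then x j else 0) else 0) = 0 := by
            split_ifs with hB hE
            · exfalso
              have hvv : (j : ℕ) = (i + 1) * M + (a - (N - M)) := by rw [hE]
              omega
            · rfl
            · rfl
          rw [z1, z2, add_zero]
      · rw [if_neg h3, zero_mul]
        have n1 : ¬(j = (⟨i * M + a, hj1⟩ : Fin ((r+1)*M))) ∨ ¬ a < M := by
          by_cases haM : a < M
          · left; intro he
            have hv : (j : ℕ) = i * M + a := by rw [he]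
            exact h1 (by rw [hv]; exact (div_add i a hM haM).1)
          · right; exact haM
        have n2 : ¬(j = (⟨(i + 1) * M + (a - (N - M)), hj2⟩ : Fin ((r+1)*M))) := by
          intro he
          have hv : (j : ℕ) = (i + 1) * M + (a - (N - M)) := by rw [he]
          exact h3 (by rw [hv]; exact (div_add (i+1) (a - (N - M)) hM (by omega)).1)
        rw [if_neg n2]
        rcases n1 with n1 | n1
        · rw [if_neg n1]; split_ifs <;> simp
        · rw [if_neg n1]; split_ifs <;> simp
  rw [Matrix.mulVec, dotProduct]
  rw [Finset.sum_congr rfl fun j _ => key j, Finset.sum_add_distrib]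
  congr 1
  · split_ifs with h
    · simp
    · simp
  · split_ifs with h
    · simp
    · simp

end Row

/-- Read off the entries of a vector, as a function on `ℕ` (zero out of range). -/
noncomputable def Xf (r M : ℕ) (x : Fin ((r + 1) * M) → ℂ) : ℕ → ℂ :=
  fun t => if h : t < (r + 1) * M then x ⟨t, h⟩ else 0

section Ker
variable {M N r : ℕ}

lemma blt {n m i b : ℕ} (hi : i < n) (hb : b < m) : i * m + b < n * m := by
  have h1 : (i + 1) * m ≤ n * m := Nat.mul_le_mul_right m hi
  have h2 : (i + 1) * m = i * m + m := by ring
  omega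

lemma bnd1 {i a : ℕ} (hi : i < r) (ha : a < 2 * M) : i * M + a < (r + 1) * M := by
  have h1 : (i + 2) * M ≤ (r + 1) * M := Nat.mul_le_mul_right M (by omega)
  have h2 : (i + 2) * M = i * M + 2 * M := by ring
  omega

lemma kerRowX (hM : 1 ≤ M) (hMN : M ≤ N) (hN2M : N < 2 * M)
    (x : Fin ((r + 1) * M) → ℂ) (hx : (Amat M N r).mulVec x = 0)
    {i a : ℕ} (hi : i < r) (ha : a < N) :
    (if a < M then Xf r M x (i * M + a) else 0) +
      (if N - M ≤ a then Xf r M x ((i + 1) * M + (a - (N - M))) else 0) = 0 := by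
  have hj1 : i * M + a < (r + 1) * M := bnd1 hi (by omega)
  have hj2 : (i + 1) * M + (a - (N - M)) < (r + 1) * M := blt (by omega) (by omega)
  have h0 := congrFun hx ⟨i * N + a, blt hi ha⟩
  rw [rowEq hM hMN hN2M x i a hi ha (blt hi ha) hj1 hj2] at h0
  rw [Xf, Xf, dif_pos hj1, dif_pos hj2]
  simpa using h0

lemma E1X (hM : 1 ≤ M) (hMN : M ≤ N) (hN2M : N < 2 * M)
    (x : Fin ((r + 1) * M) → ℂ) (hx : (Amat M N r).mulVec x = 0)
    {i a : ℕ} (hi : i < r) (ha : a < N - M) :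
    Xf r M x (i * M + a) = 0 := by
  have h := kerRowX hM hMN hN2M x hx hi (show a < N by omega)
  rw [if_pos (by omega : a < M), if_neg (by omega : ¬ N - M ≤ a), add_zero] at h
  exact h

lemma E2X (hM : 1 ≤ M) (hMN : M ≤ N) (hN2M : N < 2 * M)
    (x : Fin ((r + 1) * M) → ℂ) (hx : (Amat M N r).mulVec x = 0)
    {i a : ℕ} (hi : i < r) (hda : N - M ≤ a) (haM : a < M) :
    Xf r M x (i * M + a) + Xf r M x ((i + 1) * M + (a - (N - M))) = 0 := by
  have h := kerRowX hM hMN hN2M x hx hi (show a < N by omega)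
  rw [if_pos haM, if_pos hda] at h
  exact h

lemma E3X (hM : 1 ≤ M) (hMN : M ≤ N) (hN2M : N < 2 * M)
    (x : Fin ((r + 1) * M) → ℂ) (hx : (Amat M N r).mulVec x = 0)
    {i b : ℕ} (hi : i < r) (hb1 : M - (N - M) ≤ b) (hb2 : b < M) :
    Xf r M x ((i + 1) * M + b) = 0 := by
  have h := kerRowX hM hMN hN2M x hx hi (show b + (N - M) < N by omega)
  rw [if_neg (by omega : ¬ b + (N - M) < M), if_pos (by omega : N - M ≤ b + (N - M)),
    zero_add] at h
  rw [show b + (N - M) - (N - M) = b by omega] at h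
  exact h

lemma claimRX (hM : 1 ≤ M) (hMN : M ≤ N) (hN2M : N < 2 * M)
    (x : Fin ((r + 1) * M) → ℂ) (hx : (Amat M N r).mulVec x = 0) :
    ∀ j i b : ℕ, i + j ≤ r → b < M → b < j * (N - M) → Xf r M x (i * M + b) = 0 := by
  intro j
  induction j with
  | zero => intro i b _ _ hb; omega
  | succ j ih =>
    intro i b hij hbM hb
    have hjd : (j + 1) * (N - M) = j * (N - M) + (N - M) := by ring
    by_cases hbd : b < N - M
    · exact E1X hM hMN hN2M x hx (by omega) hbd
    · have h2 := E2X hM hMN hN2M x hx (show i < r by omega) (by omega) hbM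
      have h3 := ih (i + 1) (b - (N - M)) (by omega) (by omega) (by omega)
      rw [h3, add_zero] at h2
      exact h2

lemma claimPX (hM : 1 ≤ M) (hMN : M ≤ N) (hN2M : N < 2 * M)
    (x : Fin ((r + 1) * M) → ℂ) (hx : (Amat M N r).mulVec x = 0) :
    ∀ i, i ≤ r → ∀ b, b < M →
      (b + i * (N - M) < M → Xf r M x (i * M + b) = (-1) ^ i * Xf r M x (b + i * (N - M))) ∧
      (M ≤ b + i * (N - M) → Xf r M x (i * M + b) = 0) := by
  intro i
  induction i with
  | zero =>
    intro _ b hbM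
    constructor
    · intro _; simp
    · intro h; omega
  | succ i ih =>
    intro hir b hbM
    have hid : (i + 1) * (N - M) = i * (N - M) + (N - M) := by ring
    by_cases hbig : M - (N - M) ≤ b
    · have h0 := E3X hM hMN hN2M x hx (show i < r by omega) hbig hbM
      exact ⟨fun h => absurd h (by omega), fun _ => h0⟩
    · have h2 := E2X hM hMN hN2M x hx (show i < r by omega)
        (show N - M ≤ b + (N - M) by omega) (show b + (N - M) < M by omega)
      rw [show b + (N - M) - (N - M) = b by omega] at h2
      have ihs := ih (by omega) (b + (N - M)) (by omega)
      constructor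
      · intro hlt
        have h4 := ihs.1 (by omega)
        rw [show b + (N - M) + i * (N - M) = b + (i + 1) * (N - M) by omega] at h4
        rw [h4] at h2
        have : Xf r M x ((i + 1) * M + b) = -((-1) ^ i * Xf r M x (b + (i + 1) * (N - M))) := by
          linear_combination h2
        rw [this, pow_succ]
        ring
      · intro hge
        have h4 := ihs.2 (by omega)
        rw [h4, zero_add] at h2
        exact h2

end Ker

/-- Candidate kernel element generator. -/
noncomputable def Yf (M N r : ℕ) (c : Fin (M - r * (N - M)) → ℂ) : ℕ → ℂ :=
  fun t =>
    if h : r * (N - M) ≤ t % M + t / M * (N - M) ∧ t % M + t / M * (N - M) < M then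
      (-1 : ℂ) ^ (t / M) * c ⟨t % M + t / M * (N - M) - r * (N - M), by omega⟩
    else 0

section Yl
variable {M N r : ℕ}

lemma Yf_eval (hM : 1 ≤ M) (c : Fin (M - r * (N - M)) → ℂ) (i b : ℕ) (hb : b < M) :
    Yf M N r c (i * M + b) =
      if h : r * (N - M) ≤ b + i * (N - M) ∧ b + i * (N - M) < M then
        (-1 : ℂ) ^ i * c ⟨b + i * (N - M) - r * (N - M), by omega⟩
      else 0 := by
  obtain ⟨h1, h2⟩ := div_add i b hM hb
  simp [Yf, h1, h2]

end Yl

theorem stmt_12' (M N r : ℕ) (hM : 1 ≤ M) (hMN : M ≤ N) (hN2M : N < 2 * M) (hr : 1 ≤ r) :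
    Module.finrank ℂ (LinearMap.ker (Matrix.mulVecLin (Amat M N r))) =
      (r + 1) * M - r * N := by
  classical
  have hN : 0 < N := lt_of_lt_of_le hM hMN
  have hrd : r * N = r * M + r * (N - M) := by
    rw [← Nat.mul_add]; congr 1; omega
  have hrM : (r + 1) * M = r * M + M := by ring
  have hgoal : (r + 1) * M - r * N = M - r * (N - M) := by omega
  rw [hgoal]
  have hMle : M ≤ (r + 1) * M := Nat.le_mul_of_pos_left M (by omega)
  have hidx : ∀ k : Fin (M - r * (N - M)), r * (N - M) + (k : ℕ) < (r + 1) * M := by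
    intro k; have := k.isLt; omega
  let S : LinearMap.ker (Matrix.mulVecLin (Amat M N r)) →ₗ[ℂ] (Fin (M - r * (N - M)) → ℂ) :=
    (LinearMap.funLeft ℂ ℂ fun (k : Fin (M - r * (N - M))) => (⟨r * (N - M) + (k : ℕ), hidx k⟩ : Fin ((r + 1) * M))).comp
      (LinearMap.ker (Matrix.mulVecLin (Amat M N r))).subtype
  have hSapp : ∀ (x : LinearMap.ker (Matrix.mulVecLin (Amat M N r))) (k : Fin (M - r * (N - M))),
      S x k = (x : Fin ((r + 1) * M) → ℂ) ⟨r * (N - M) + (k : ℕ), hidx k⟩ := fun _ _ => rfl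
  have hinj : Function.Injective S := by
    intro x y hxy
    have h0 : S (x - y) = 0 := by rw [map_sub, hxy, sub_self]
    have hker : (Amat M N r).mulVec ((x : Fin ((r + 1) * M) → ℂ) - y) = 0 := by
      have := (x - y).2
      rwa [LinearMap.mem_ker, Matrix.mulVecLin_apply] at this
    set z : Fin ((r + 1) * M) → ℂ := (x : Fin ((r + 1) * M) → ℂ) - (y : Fin ((r + 1) * M) → ℂ) with hz
    have hzero : ∀ k : Fin (M - r * (N - M)), Xf r M z (r * (N - M) + (k : ℕ)) = 0 := by
      intro k
      have := congrFun h0 k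
      rw [hSapp] at this
      rw [Xf, dif_pos (hidx k)]
      exact this
    have hzzero : z = 0 := by
      funext j
      have hiR : (j : ℕ) / M < r + 1 := (Nat.div_lt_iff_lt_mul hM).2 j.isLt
      have hbM : (j : ℕ) % M < M := Nat.mod_lt _ hM
      have hj : (j : ℕ) = (j : ℕ) / M * M + (j : ℕ) % M := (Nat.div_add_mod' _ _).symm
      set i := (j : ℕ) / M
      set b := (j : ℕ) % M
      have hXj : Xf r M z (i * M + b) = z j := by
        rw [← hj]; simp [Xf]
      have hmul : i * (N - M) ≤ r * (N - M) := Nat.mul_le_mul_right _ (by omega)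
      have hP := claimPX hM hMN hN2M z hker i (by omega) b hbM
      show z j = 0
      rcases lt_or_ge (b + i * (N - M)) M with hlt | hge
      · have hP1 := hP.1 hlt
        rcases lt_or_ge (b + i * (N - M)) (r * (N - M)) with hsm | hbg
        · have hzR := claimRX hM hMN hN2M z hker r 0 (b + i * (N - M)) (by omega) (by omega) hsm
          rw [show 0 * M + (b + i * (N - M)) = b + i * (N - M) by omega] at hzR
          rw [← hXj, hP1, hzR, mul_zero]
        · have hk : b + i * (N - M) - r * (N - M) < M - r * (N - M) := by omega
          have hzk := hzero ⟨_, hk⟩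
          rw [show r * (N - M) + (b + i * (N - M) - r * (N - M)) = b + i * (N - M) by omega] at hzk
          rw [← hXj, hP1, hzk, mul_zero]
      · rw [← hXj, hP.2 hge]
    have : x - y = 0 := Subtype.ext (by simpa [hz] using hzzero)
    exact sub_eq_zero.1 this
  have hsurj : Function.Surjective S := by
    intro c
    set y : Fin ((r + 1) * M) → ℂ := fun j => Yf M N r c (j : ℕ) with hy
    have hyker : (Amat M N r).mulVec y = 0 := by
      funext ρ
      rw [Pi.zero_apply]
      have hiR : (ρ : ℕ) / N < r := (Nat.div_lt_iff_lt_mul hN).2 ρ.isLt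
      have haN : (ρ : ℕ) % N < N := Nat.mod_lt _ hN
      have hρ : ρ = (⟨(ρ : ℕ) / N * N + (ρ : ℕ) % N, blt hiR haN⟩ : Fin (r * N)) :=
        Fin.ext (Nat.div_add_mod' _ _).symm
      set i := (ρ : ℕ) / N
      set a := (ρ : ℕ) % N
      rw [hρ, rowEq hM hMN hN2M y i a hiR haN (blt hiR haN) (bnd1 hiR (by omega))
        (blt (by omega) (by omega))]
      have hmul1 : (i + 1) * (N - M) ≤ r * (N - M) := Nat.mul_le_mul_right _ (by omega)
      have hmul2 : (i + 1) * (N - M) = i * (N - M) + (N - M) := by ring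
      have hv1 : y (⟨i * M + a, bnd1 hiR (by omega)⟩ : Fin ((r + 1) * M)) = Yf M N r c (i * M + a) := rfl
      have hv2 : y (⟨(i + 1) * M + (a - (N - M)), blt (by omega) (by omega)⟩ : Fin ((r + 1) * M)) =
          Yf M N r c ((i + 1) * M + (a - (N - M))) := rfl
      rcases lt_or_ge a (N - M) with h1 | h1
      · rw [if_pos (by omega : a < M), if_neg (by omega : ¬ N - M ≤ a), hv1,
          Yf_eval hM c i a (by omega), dif_neg (by omega), add_zero]
      · rcases lt_or_ge a M with h2 | h2
        · rw [if_pos h2, if_pos h1, hv1, hv2, Yf_eval hM c i a h2,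
            Yf_eval hM c (i + 1) (a - (N - M)) (by omega)]
          simp only [show a - (N - M) + (i + 1) * (N - M) = a + i * (N - M) by omega]
          split_ifs with h3
          · rw [pow_succ]; ring
          · rw [add_zero]
        · rw [if_neg (by omega : ¬ a < M), if_pos h1, hv2,
            Yf_eval hM c (i + 1) (a - (N - M)) (by omega)]
          simp only [show a - (N - M) + (i + 1) * (N - M) = a + i * (N - M) by omega]
          rw [dif_neg (by omega), zero_add]
    refine ⟨⟨y, ?_⟩, ?_⟩
    · rw [LinearMap.mem_ker, Matrix.mulVecLin_apply, hyker]
    · funext k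
      rw [hSapp]
      show Yf M N r c (r * (N - M) + (k : ℕ)) = c k
      have hkM : r * (N - M) + (k : ℕ) < M := by have := k.isLt; omega
      have := Yf_eval hM c 0 (r * (N - M) + (k : ℕ)) hkM
      rw [show 0 * M + (r * (N - M) + (k : ℕ)) = r * (N - M) + (k : ℕ) by omega] at this
      rw [this, dif_pos (by have := k.isLt; omega)]
      simp
  have heq := LinearEquiv.finrank_eq (LinearEquiv.ofBijective S ⟨hinj, hsurj⟩)
  rw [heq, Module.finrank_fin_fun]

theorem stmt_12 (M N r : ℕ) (hM : 1 ≤ M) (hMN : M ≤ N) (hN2M : N < 2 * M) (hr : 1 ≤ r) :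
    Module.finrank ℂ (LinearMap.ker (Matrix.mulVecLin (Amat M N r))) =
      (r + 1) * M - r * N := by
  exact stmt_12' M N r hM hMN hN2M hr
end

section
/- Let d ≥ 1 and M = N = 2d. Let H_12, H_13, H_21, H_23, H_31, H_32 be invertible 2d×2d complex matrices and suppose B = H_12 H_32^{-1} H_31 H_21^{-1} H_23 H_13^{-1} is diagonalizable with 2d distinct eigenvalues. Then there exist d-dimensional subspaces U_1, U_2, U_3, V_1, V_2, V_3 of ℂ^{2d} such that V_i ⊥ H_{ij} U_j for all i ≠ j in {1,2,3} (indices of H as given). -/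
open Matrix Module Submodule

/-! Let `E` be spanned by `d` eigenvectors of `B = H₁₂ H₃₂⁻¹ H₃₁ H₂₁⁻¹ H₂₃ H₁₃⁻¹`, so `B E ⊆ E`.
Transport `E` around the cycle: `U₃ = H₁₃⁻¹ E`, `U₁ = H₂₁⁻¹ H₂₃ U₃`, `U₂ = H₃₂⁻¹ H₃₁ U₁`. At each
receiver both interference images then lie in one `d`-dimensional subspace (at receiver 1 because
`H₁₂ U₂ = B E ⊆ E = H₁₃ U₃`), and `Vᵢ` is its orthogonal complement. -/

section Alignment

variable {𝕜 V : Type*} [RCLike 𝕜] [NormedAddCommGroup V] [InnerProductSpace 𝕜 V]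

lemma inner_apply_eq_zero_of_map_le {f : V →ₗ[𝕜] V} {U W : Submodule 𝕜 V} (h : U.map f ≤ W) :
    ∀ v ∈ Wᗮ, ∀ u ∈ U, inner 𝕜 v (f u) = 0 :=
  fun _ hv _ hu ↦ inner_left_of_mem_orthogonal (h (mem_map_of_mem hu)) hv

lemma finrank_orthogonal_eq_sub [FiniteDimensional 𝕜 V] (W : Submodule 𝕜 V) :
    finrank 𝕜 Wᗮ = finrank 𝕜 V - finrank 𝕜 W := by
  have := W.finrank_add_finrank_orthogonal
  omega

theorem exists_alignment_of_cycle_invariant [FiniteDimensional 𝕜 V]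
    (e12 e13 e21 e23 e31 e32 : V ≃ₗ[𝕜] V) (E : Submodule 𝕜 V)
    (hE : ∀ x ∈ E, e12 (e32.symm (e31 (e21.symm (e23 (e13.symm x))))) ∈ E) :
    ∃ U1 U2 U3 V1 V2 V3 : Submodule 𝕜 V,
      finrank 𝕜 U1 = finrank 𝕜 E ∧ finrank 𝕜 U2 = finrank 𝕜 E ∧ finrank 𝕜 U3 = finrank 𝕜 E ∧
      finrank 𝕜 V1 = finrank 𝕜 V - finrank 𝕜 E ∧ finrank 𝕜 V2 = finrank 𝕜 V - finrank 𝕜 E ∧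
      finrank 𝕜 V3 = finrank 𝕜 V - finrank 𝕜 E ∧
      (∀ v ∈ V1, ∀ u ∈ U2, inner 𝕜 v (e12 u) = 0) ∧ (∀ v ∈ V1, ∀ u ∈ U3, inner 𝕜 v (e13 u) = 0) ∧
      (∀ v ∈ V2, ∀ u ∈ U1, inner 𝕜 v (e21 u) = 0) ∧ (∀ v ∈ V2, ∀ u ∈ U3, inner 𝕜 v (e23 u) = 0) ∧
      (∀ v ∈ V3, ∀ u ∈ U1, inner 𝕜 v (e31 u) = 0) ∧
      (∀ v ∈ V3, ∀ u ∈ U2, inner 𝕜 v (e32 u) = 0) := by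
  set U3 := E.map (e13.symm : V →ₗ[𝕜] V)
  set W1 := U3.map (e23 : V →ₗ[𝕜] V)
  set U1 := W1.map (e21.symm : V →ₗ[𝕜] V)
  set W2 := U1.map (e31 : V →ₗ[𝕜] V)
  set U2 := W2.map (e32.symm : V →ₗ[𝕜] V)
  have hU2 : U2.map (e12 : V →ₗ[𝕜] V) ≤ E := by
    rintro _ ⟨_, ⟨_, ⟨_, ⟨_, ⟨_, ⟨x, hx, rfl⟩, rfl⟩, rfl⟩, rfl⟩, rfl⟩, rfl⟩
    exact hE x hx
  refine ⟨U1, U2, U3, Eᗮ, W1ᗮ, W2ᗮ, ?_, ?_, ?_, ?_, ?_, ?_,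
    inner_apply_eq_zero_of_map_le hU2,
    inner_apply_eq_zero_of_map_le ((map_symm_eq_iff e13).mp rfl).le,
    inner_apply_eq_zero_of_map_le ((map_symm_eq_iff e21).mp rfl).le,
    inner_apply_eq_zero_of_map_le le_rfl,
    inner_apply_eq_zero_of_map_le le_rfl,
    inner_apply_eq_zero_of_map_le ((map_symm_eq_iff e32).mp rfl).le⟩
  all_goals simp only [U1, U2, U3, W1, W2, LinearEquiv.finrank_map_eq, finrank_orthogonal_eq_sub]

end Alignment

section Matrix

variable {𝕜 ι : Type*} [RCLike 𝕜] [Fintype ι] [DecidableEq ι]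

noncomputable def IsUnit.toEuclideanLinEquiv {A : Matrix ι ι 𝕜} (hA : IsUnit A) :
    EuclideanSpace 𝕜 ι ≃ₗ[𝕜] EuclideanSpace 𝕜 ι :=
  toLinearEquiv (PiLp.basisFun 2 𝕜 ι) A ((isUnit_iff_isUnit_det A).mp hA)

@[simp]
lemma IsUnit.toEuclideanLinEquiv_apply {A : Matrix ι ι 𝕜} (hA : IsUnit A)
    (x : EuclideanSpace 𝕜 ι) : hA.toEuclideanLinEquiv x = toEuclideanLin A x :=
  rfl

@[simp]
lemma IsUnit.toEuclideanLinEquiv_symm_apply {A : Matrix ι ι 𝕜} (hA : IsUnit A)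
    (x : EuclideanSpace 𝕜 ι) : hA.toEuclideanLinEquiv.symm x = toEuclideanLin A⁻¹ x :=
  rfl

lemma toEuclideanLin_diagonal_single (D : ι → 𝕜) (i : ι) :
    toEuclideanLin (diagonal D) (EuclideanSpace.single i 1) = D i • EuclideanSpace.single i 1 := by
  ext j
  simp [toLpLin_apply]

theorem exists_invariant_submodule_finrank_eq {B P : Matrix ι ι 𝕜} (hP : IsUnit P) {D : ι → 𝕜}
    (h : B * P = P * diagonal D) {k : ℕ} (hk : k ≤ Fintype.card ι) :
    ∃ E : Submodule 𝕜 (EuclideanSpace 𝕜 ι), finrank 𝕜 E = k ∧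
      ∀ x ∈ E, toEuclideanLin B x ∈ E := by
  obtain ⟨s, -, rfl⟩ := (Finset.univ : Finset ι).exists_subset_card_eq hk
  set v : s → EuclideanSpace 𝕜 ι := fun i ↦ toEuclideanLin P (EuclideanSpace.single i 1)
  have hv (i : s) : toEuclideanLin B (v i) = D i • v i := by
    calc toEuclideanLin B (v i) = toEuclideanLin (B * P) (EuclideanSpace.single i 1) := by
          simp only [v, toLpLin_mul_same, LinearMap.comp_apply]
      _ = D i • v i := by
          rw [h, toLpLin_mul_same, LinearMap.comp_apply, toEuclideanLin_diagonal_single, map_smul]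
  have hli : LinearIndependent 𝕜 v :=
    ((PiLp.linearIndependent_single_one 2 𝕜).comp _ Subtype.val_injective).map'
      (toEuclideanLin P)
      (ker_toLin_eq_bot (PiLp.basisFun 2 𝕜 ι) P ((isUnit_iff_isUnit_det P).mp hP))
  have hinv : span 𝕜 (Set.range v) ≤ (span 𝕜 (Set.range v)).comap (toEuclideanLin B) := by
    rw [span_le]
    rintro _ ⟨i, rfl⟩
    rw [SetLike.mem_coe, mem_comap, hv]
    exact smul_mem _ _ (subset_span ⟨i, rfl⟩)
  exact ⟨span 𝕜 (Set.range v), by rw [finrank_span_eq_card hli, Fintype.card_coe], hinv⟩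

end Matrix

theorem stmt_13_general (d : ℕ)
    (H12 H13 H21 H23 H31 H32 : Matrix (Fin (2 * d)) (Fin (2 * d)) ℂ)
    (h12 : IsUnit H12) (h13 : IsUnit H13) (h21 : IsUnit H21)
    (h23 : IsUnit H23) (h31 : IsUnit H31) (h32 : IsUnit H32)
    -- B = H12 H32⁻¹ H31 H21⁻¹ H23 H13⁻¹ is diagonalizable with 2d distinct eigenvalues:
    (P : Matrix (Fin (2 * d)) (Fin (2 * d)) ℂ) (hP : IsUnit P)
    (D : Fin (2 * d) → ℂ)
    (hdiag : H12 * H32⁻¹ * H31 * H21⁻¹ * H23 * H13⁻¹ = P * Matrix.diagonal D * P⁻¹) :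
    ∃ U1 U2 U3 V1 V2 V3 : Submodule ℂ (EuclideanSpace ℂ (Fin (2 * d))),
      Module.finrank ℂ U1 = d ∧ Module.finrank ℂ U2 = d ∧ Module.finrank ℂ U3 = d ∧
      Module.finrank ℂ V1 = d ∧ Module.finrank ℂ V2 = d ∧ Module.finrank ℂ V3 = d ∧
      (∀ v ∈ V1, ∀ u ∈ U2, (inner ℂ v (Matrix.toEuclideanLin H12 u) : ℂ) = 0) ∧
      (∀ v ∈ V1, ∀ u ∈ U3, (inner ℂ v (Matrix.toEuclideanLin H13 u) : ℂ) = 0) ∧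
      (∀ v ∈ V2, ∀ u ∈ U1, (inner ℂ v (Matrix.toEuclideanLin H21 u) : ℂ) = 0) ∧
      (∀ v ∈ V2, ∀ u ∈ U3, (inner ℂ v (Matrix.toEuclideanLin H23 u) : ℂ) = 0) ∧
      (∀ v ∈ V3, ∀ u ∈ U1, (inner ℂ v (Matrix.toEuclideanLin H31 u) : ℂ) = 0) ∧
      (∀ v ∈ V3, ∀ u ∈ U2, (inner ℂ v (Matrix.toEuclideanLin H32 u) : ℂ) = 0) := by
  have heig : H12 * H32⁻¹ * H31 * H21⁻¹ * H23 * H13⁻¹ * P = P * diagonal D := by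
    rw [hdiag, nonsing_inv_mul_cancel_right _ _ ((isUnit_iff_isUnit_det P).mp hP)]
  obtain ⟨E, hE_rank, hE⟩ := exists_invariant_submodule_finrank_eq (k := d) hP heig
    (by rw [Fintype.card_fin]; omega)
  obtain ⟨U1, U2, U3, V1, V2, V3, hU1, hU2, hU3, hV1, hV2, hV3, horth⟩ :=
    exists_alignment_of_cycle_invariant h12.toEuclideanLinEquiv h13.toEuclideanLinEquiv
      h21.toEuclideanLinEquiv h23.toEuclideanLinEquiv h31.toEuclideanLinEquiv
      h32.toEuclideanLinEquiv E fun x hx ↦ by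
        simpa only [IsUnit.toEuclideanLinEquiv_apply, IsUnit.toEuclideanLinEquiv_symm_apply,
          toLpLin_mul_same, LinearMap.comp_apply] using hE x hx
  have hcodim : finrank ℂ (EuclideanSpace ℂ (Fin (2 * d))) - finrank ℂ E = d := by
    rw [finrank_euclideanSpace_fin, hE_rank]
    omega
  rw [hE_rank] at hU1 hU2 hU3
  rw [hcodim] at hV1 hV2 hV3
  exact ⟨U1, U2, U3, V1, V2, V3, hU1, hU2, hU3, hV1, hV2, hV3, horth⟩

theorem stmt_13 (d : ℕ) (hd : 1 ≤ d)
    (H12 H13 H21 H23 H31 H32 : Matrix (Fin (2 * d)) (Fin (2 * d)) ℂ)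
    (h12 : IsUnit H12) (h13 : IsUnit H13) (h21 : IsUnit H21)
    (h23 : IsUnit H23) (h31 : IsUnit H31) (h32 : IsUnit H32)
    -- B = H12 H32⁻¹ H31 H21⁻¹ H23 H13⁻¹ is diagonalizable with 2d distinct eigenvalues:
    (P : Matrix (Fin (2 * d)) (Fin (2 * d)) ℂ) (hP : IsUnit P)
    (D : Fin (2 * d) → ℂ) (hD : Function.Injective D)
    (hdiag : H12 * H32⁻¹ * H31 * H21⁻¹ * H23 * H13⁻¹ = P * Matrix.diagonal D * P⁻¹) :
    ∃ U1 U2 U3 V1 V2 V3 : Submodule ℂ (EuclideanSpace ℂ (Fin (2 * d))),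
      Module.finrank ℂ U1 = d ∧ Module.finrank ℂ U2 = d ∧ Module.finrank ℂ U3 = d ∧
      Module.finrank ℂ V1 = d ∧ Module.finrank ℂ V2 = d ∧ Module.finrank ℂ V3 = d ∧
      (∀ v ∈ V1, ∀ u ∈ U2, (inner ℂ v (Matrix.toEuclideanLin H12 u) : ℂ) = 0) ∧
      (∀ v ∈ V1, ∀ u ∈ U3, (inner ℂ v (Matrix.toEuclideanLin H13 u) : ℂ) = 0) ∧
      (∀ v ∈ V2, ∀ u ∈ U1, (inner ℂ v (Matrix.toEuclideanLin H21 u) : ℂ) = 0) ∧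
      (∀ v ∈ V2, ∀ u ∈ U3, (inner ℂ v (Matrix.toEuclideanLin H23 u) : ℂ) = 0) ∧
      (∀ v ∈ V3, ∀ u ∈ U1, (inner ℂ v (Matrix.toEuclideanLin H31 u) : ℂ) = 0) ∧
      (∀ v ∈ V3, ∀ u ∈ U2, (inner ℂ v (Matrix.toEuclideanLin H32 u) : ℂ) = 0) :=
  stmt_13_general d H12 H13 H21 H23 H31 H32 h12 h13 h21 h23 h31 h32 P hP D hdiag
end

section
/- Let r ≥ 1, d ≥ 1 be integers with d > (r+1)((r+1)M − rN) where M, N satisfy rN < (r+1)M, (2r+1)d ≤ (r+1)M and (2r+3)d ≤ (r+1)N. Define d' = d − (r+1)((r+1)M − rN). Then N − (r+2)((r+1)M − rN) − ⌈d'/r⌉ − d' ≥ d. -/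
theorem stmt_16 (M N d r : ℕ) (hM : 0 < M) (hN : 0 < N) (hd : 0 < d) (hr : 0 < r)
    (h1 : r * N < (r + 1) * M)
    (h2 : (2 * r + 1) * d ≤ (r + 1) * M)
    (h3 : (2 * r + 3) * d ≤ (r + 1) * N)
    (hbig : d > (r + 1) * ((r + 1) * M - r * N))
    (d' : ℕ) (hd' : d' = d - (r + 1) * ((r + 1) * M - r * N)) :
    (N : ℤ) - ((r : ℤ) + 2) * (((r : ℤ) + 1) * M - (r : ℤ) * N)
        - ⌈(d' : ℚ) / (r : ℚ)⌉ - (d' : ℤ) ≥ (d : ℤ) := by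
  have hsub1 : r * N ≤ (r + 1) * M := le_of_lt h1
  have hle : (r + 1) * ((r + 1) * M - r * N) ≤ d := le_of_lt hbig
  have hd'z : (d' : ℤ) = (d : ℤ) - ((r : ℤ) + 1) * (((r : ℤ) + 1) * M - (r : ℤ) * N) := by
    subst hd'
    push_cast [Nat.cast_sub hle, Nat.cast_sub hsub1]
    ring
  have hrQ : (0 : ℚ) < (r : ℚ) := by exact_mod_cast hr
  have hceil : ⌈(d' : ℚ) / (r : ℚ)⌉ ≤
      (N : ℤ) - ((r : ℤ) + 2) * (((r : ℤ) + 1) * M - (r : ℤ) * N) - (d' : ℤ) - (d : ℤ) := by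
    rw [Int.ceil_le, div_le_iff₀ hrQ]
    have h2' : ((2 * r + 1 : ℕ) : ℚ) * (d : ℚ) ≤ ((r + 1 : ℕ) : ℚ) * (M : ℚ) := by
      exact_mod_cast h2
    have hdq : (d' : ℚ) = (d : ℚ) - ((r : ℚ) + 1) * (((r : ℚ) + 1) * M - (r : ℚ) * N) := by
      exact_mod_cast hd'z
    push_cast at h2' ⊢
    nlinarith [h2', hdq]
  linarith [hceil]
end
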